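/- Roots of the boundary-intersection function F_s (Lemma B.4): let ξ₀, η₀, x ∈ ℝ with cos η₀ ≠ 0 and (sec²η₀·tan x, cos ξ₀) ≠ (0,0), define F_s(θ) = sec²η₀ · tan x · (v − c·G_s(θ)) − cos ξ₀ · (u − c·G_c(θ)), and let θ_min ∈ ℝ be such that for all θ: −sec²η₀ · tan x · cosθ − cos ξ₀ · sinθ = √(sec⁴η₀·tan²x + cos²ξ₀) · sin(θ − θ_min); set θ_max = θ_min + π. If F_s(θ_min) < 0 < F_s(θ_max), then F_s has exactly two zeros in [θ_min, θ_min + 2π), one lying in the open interval (θ_min, θ_max) and one in (θ_max, θ_min + 2π); otherwise F_s has fewer than two zeros in [θ_min, θ_min + 2π). -/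

import Mathlib

open Real Matrix

noncomputable def swK (g11 g12 g22 θ : ℝ) : ℝ :=
  Real.sqrt (g11 * Real.cos θ ^ 2 + 2 * g12 * Real.sin θ * Real.cos θ + g22 * Real.sin θ ^ 2)

noncomputable def swC (g h : ℝ) : ℝ := Real.sqrt (g * h)

noncomputable def swGc (g11 g12 g22 θ : ℝ) : ℝ :=
  (g11 * Real.cos θ + g12 * Real.sin θ) / swK g11 g12 g22 θ

noncomputable def swGs (g11 g12 g22 θ : ℝ) : ℝ :=
  (g12 * Real.cos θ + g22 * Real.sin θ) / swK g11 g12 g22 θ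

/-!
Differentiating `G_c` and `G_s` gives
`F_s'(θ) = c (g¹¹g²² − (g¹²)²) K_θ⁻³ (−sec²η₀ tan x cos θ − cos ξ₀ sin θ)`, which by the choice of
`θ_min` is a positive multiple of `sin (θ − θ_min)`. So `F_s` increases strictly on
`[θ_min, θ_max]` and decreases strictly on `[θ_max, θ_min + 2π]`, where by periodicity it returns to
`F_s(θ_min)`. For such a profile the zeros in `[θ_min, θ_min + 2π)` are one on each side of `θ_max`
when `F_s(θ_min) < 0 < F_s(θ_max)` (intermediate value theorem), and otherwise there is at most one:
`θ_min` if `F_s(θ_min) ≥ 0`, and `θ_max` if `F_s(θ_max) ≤ 0`.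
-/

open Set

section Unimodal

variable {α β : Type*} [LinearOrder β] [Zero β] {f : α → β} {a b c : α}

theorem subsingleton_zeros_of_strictMonoOn_strictAntiOn [LinearOrder α]
    (hmono : StrictMonoOn f (Icc a b)) (hanti : StrictAntiOn f (Icc b c)) (hab : a ≤ b)
    (hbc : b ≤ c) (hca : f c = f a) (h : ¬(f a < 0 ∧ 0 < f b)) :
    {x ∈ Ico a c | f x = 0}.Subsingleton := by
  rcases le_or_gt 0 (f a) with ha | ha
  · refine subsingleton_of_forall_eq a fun x ⟨⟨hax, hxc⟩, hx⟩ => by_contra fun hxa => ?_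
    have : f a < f x := by
      rcases le_or_gt x b with hxb | hbx
      · exact hmono ⟨le_rfl, hab⟩ ⟨hax, hxb⟩ (lt_of_le_of_ne hax (Ne.symm hxa))
      · exact hca ▸ hanti ⟨hbx.le, hxc.le⟩ ⟨hbc, le_rfl⟩ hxc
    exact (hx ▸ this).not_ge ha
  · have hb : f b ≤ 0 := not_lt.1 fun hb => h ⟨ha, hb⟩
    refine subsingleton_of_forall_eq b fun x ⟨⟨hax, hxc⟩, hx⟩ => by_contra fun hne => ?_
    have : f x < f b := by
      rcases lt_or_gt_of_ne hne with hxb | hbx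
      · exact hmono ⟨hax, hxb.le⟩ ⟨hab, le_rfl⟩ hxb
      · exact hanti ⟨le_rfl, hbc⟩ ⟨hbx.le, hxc.le⟩ hbx
    exact (hx ▸ this).not_ge hb

theorem exists_two_zeros_of_strictMonoOn_strictAntiOn [ConditionallyCompleteLinearOrder α]
    [TopologicalSpace α] [OrderTopology α] [DenselyOrdered α] [TopologicalSpace β]
    [OrderClosedTopology β] (hf : ContinuousOn f (Icc a c)) (hmono : StrictMonoOn f (Icc a b))
    (hanti : StrictAntiOn f (Icc b c)) (hab : a ≤ b) (hbc : b ≤ c) (hca : f c = f a)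
    (ha : f a < 0) (hb : 0 < f b) :
    ∃ x₁ ∈ Ioo a b, ∃ x₂ ∈ Ioo b c, f x₁ = 0 ∧ f x₂ = 0 ∧
      ∀ x ∈ Ico a c, f x = 0 → x = x₁ ∨ x = x₂ := by
  obtain ⟨x₁, hx₁, hfx₁⟩ :=
    intermediate_value_Ioo hab (hf.mono (Icc_subset_Icc_right hbc)) ⟨ha, hb⟩
  obtain ⟨x₂, hx₂, hfx₂⟩ :=
    intermediate_value_Ioo' hbc (hf.mono (Icc_subset_Icc_left hab)) ⟨hca ▸ ha, hb⟩
  refine ⟨x₁, hx₁, x₂, hx₂, hfx₁, hfx₂, fun x ⟨hax, hxc⟩ hx => ?_⟩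
  rcases le_or_gt x b with hxb | hbx
  · exact .inl <| hmono.injOn ⟨hax, hxb⟩ (Ioo_subset_Icc_self hx₁) (hx.trans hfx₁.symm)
  · exact .inr <| hanti.injOn ⟨hbx.le, hxc.le⟩ (Ioo_subset_Icc_self hx₂) (hx.trans hfx₂.symm)

end Unimodal

theorem strictMonoOn_strictAntiOn_of_hasDerivAt_mul_sin {f w : ℝ → ℝ} {a : ℝ}
    (hw : ∀ x, 0 < w x) (hf : ∀ x, HasDerivAt f (w x * sin (x - a)) x) :
    StrictMonoOn f (Icc a (a + π)) ∧ StrictAntiOn f (Icc (a + π) (a + 2 * π)) := by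
  have hcont : Continuous f := continuous_iff_continuousAt.2 fun x => (hf x).continuousAt
  constructor
  · refine strictMonoOn_of_hasDerivWithinAt_pos (convex_Icc _ _) hcont.continuousOn
      (fun x _ => (hf x).hasDerivWithinAt) fun x hx => ?_
    rw [interior_Icc] at hx
    exact mul_pos (hw x) (sin_pos_of_pos_of_lt_pi (by linarith [hx.1]) (by linarith [hx.2]))
  · refine strictAntiOn_of_hasDerivWithinAt_neg (convex_Icc _ _) hcont.continuousOn
      (fun x _ => (hf x).hasDerivWithinAt) fun x hx => ?_
    rw [interior_Icc] at hx
    refine mul_neg_of_pos_of_neg (hw x) ?_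
    rw [← sin_sub_two_pi]
    exact sin_neg_of_neg_of_neg_pi_lt (by linarith [hx.2]) (by linarith [hx.1])

theorem quadratic_form_pos {g11 g12 g22 p q : ℝ} (h11 : 0 < g11)
    (hdet : 0 < g11 * g22 - g12 ^ 2) (hpq : p ≠ 0 ∨ q ≠ 0) :
    0 < g11 * p ^ 2 + 2 * g12 * q * p + g22 * q ^ 2 := by
  rcases eq_or_ne q 0 with rfl | hq
  · have hp : p ≠ 0 := by simpa using hpq
    simpa using mul_pos h11 (sq_pos_of_ne_zero hp)
  · have hsq : g11 * (g11 * p ^ 2 + 2 * g12 * q * p + g22 * q ^ 2) =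
        (g11 * p + g12 * q) ^ 2 + (g11 * g22 - g12 ^ 2) * q ^ 2 := by ring
    refine pos_of_mul_pos_right ?_ h11.le
    rw [hsq]
    positivity

section Metric

variable {g11 g12 g22 : ℝ}

theorem swK_pos (h11 : 0 < g11) (hdet : 0 < g11 * g22 - g12 ^ 2) (θ : ℝ) :
    0 < swK g11 g12 g22 θ :=
  sqrt_pos.2 <| quadratic_form_pos h11 hdet <| by
    by_contra! h
    simpa [h.1, h.2] using sin_sq_add_cos_sq θ

theorem hasDerivAt_swK (h11 : 0 < g11) (hdet : 0 < g11 * g22 - g12 ^ 2) (θ : ℝ) :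
    HasDerivAt (swK g11 g12 g22)
      ((cos θ * (g12 * cos θ + g22 * sin θ) - sin θ * (g11 * cos θ + g12 * sin θ)) /
        swK g11 g12 g22 θ) θ := by
  have hQ : HasDerivAt (fun t => g11 * cos t ^ 2 + 2 * g12 * sin t * cos t + g22 * sin t ^ 2)
      (2 * (cos θ * (g12 * cos θ + g22 * sin θ) - sin θ * (g11 * cos θ + g12 * sin θ))) θ := by
    refine (((((hasDerivAt_cos θ).pow 2).const_mul g11).add
      (((hasDerivAt_sin θ).const_mul (2 * g12)).mul (hasDerivAt_cos θ))).add
      (((hasDerivAt_sin θ).pow 2).const_mul g22)).congr_deriv ?_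
    ring
  refine (hQ.sqrt (sqrt_pos.1 (swK_pos h11 hdet θ)).ne').congr_deriv ?_
  rw [mul_div_mul_left _ _ two_ne_zero]
  rfl

theorem swK_sq (h11 : 0 < g11) (hdet : 0 < g11 * g22 - g12 ^ 2) (θ : ℝ) :
    swK g11 g12 g22 θ ^ 2 =
      cos θ * (g11 * cos θ + g12 * sin θ) + sin θ * (g12 * cos θ + g22 * sin θ) := by
  rw [swK, sq_sqrt (sqrt_pos.1 (swK_pos h11 hdet θ)).le]
  ring

theorem hasDerivAt_swGc (h11 : 0 < g11) (hdet : 0 < g11 * g22 - g12 ^ 2) (θ : ℝ) :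
    HasDerivAt (swGc g11 g12 g22)
      (-((g11 * g22 - g12 ^ 2) * sin θ) / swK g11 g12 g22 θ ^ 3) θ := by
  have hN : HasDerivAt (fun t => g11 * cos t + g12 * sin t) (g12 * cos θ - g11 * sin θ) θ := by
    refine (((hasDerivAt_cos θ).const_mul g11).add
      ((hasDerivAt_sin θ).const_mul g12)).congr_deriv ?_
    ring
  have hK : swK g11 g12 g22 θ ≠ 0 := (swK_pos h11 hdet θ).ne'
  refine (hN.div (hasDerivAt_swK h11 hdet θ) hK).congr_deriv ?_
  field_simp
  linear_combination (g12 * cos θ - g11 * sin θ) * swK_sq h11 hdet θ -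
    (g11 * g22 - g12 ^ 2) * sin θ * sin_sq_add_cos_sq θ

theorem hasDerivAt_swGs (h11 : 0 < g11) (hdet : 0 < g11 * g22 - g12 ^ 2) (θ : ℝ) :
    HasDerivAt (swGs g11 g12 g22)
      ((g11 * g22 - g12 ^ 2) * cos θ / swK g11 g12 g22 θ ^ 3) θ := by
  have hM : HasDerivAt (fun t => g12 * cos t + g22 * sin t) (g22 * cos θ - g12 * sin θ) θ := by
    refine (((hasDerivAt_cos θ).const_mul g12).add
      ((hasDerivAt_sin θ).const_mul g22)).congr_deriv ?_
    ring
  have hK : swK g11 g12 g22 θ ≠ 0 := (swK_pos h11 hdet θ).ne'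
  refine (hM.div (hasDerivAt_swK h11 hdet θ) hK).congr_deriv ?_
  field_simp
  linear_combination (g22 * cos θ - g12 * sin θ) * swK_sq h11 hdet θ +
    (g11 * g22 - g12 ^ 2) * cos θ * sin_sq_add_cos_sq θ

theorem hasDerivAt_sub_swGs_sub_swGc (h11 : 0 < g11) (hdet : 0 < g11 * g22 - g12 ^ 2)
    (A B c u v θ : ℝ) :
    HasDerivAt (fun t => A * (v - c * swGs g11 g12 g22 t) - B * (u - c * swGc g11 g12 g22 t))
      (c * (g11 * g22 - g12 ^ 2) / swK g11 g12 g22 θ ^ 3 * (-A * cos θ - B * sin θ)) θ := by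
  refine ((((hasDerivAt_swGs h11 hdet θ).const_mul c).const_sub v |>.const_mul A).sub
    (((hasDerivAt_swGc h11 hdet θ).const_mul c).const_sub u |>.const_mul B)).congr_deriv ?_
  ring

theorem swGc_periodic : Function.Periodic (swGc g11 g12 g22) (2 * π) := fun θ => by
  simp only [swGc, swK, cos_add_two_pi, sin_add_two_pi]

theorem swGs_periodic : Function.Periodic (swGs g11 g12 g22) (2 * π) := fun θ => by
  simp only [swGs, swK, cos_add_two_pi, sin_add_two_pi]

end Metric

theorem roots_Fs_general
    (g h u v g11 g12 g22 ξ0 η0 x θmin : ℝ) (hg : 0 < g) (hh : 0 < h)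
    (h11 : 0 < g11) (hdet : 0 < g11 * g22 - g12 ^ 2)
    (hne : ((1 / Real.cos η0) ^ 2 * Real.tan x, Real.cos ξ0) ≠ (0, 0))
    (hθmin : ∀ θ : ℝ,
      -((1 / Real.cos η0) ^ 2 * Real.tan x) * Real.cos θ - Real.cos ξ0 * Real.sin θ =
        Real.sqrt ((1 / Real.cos η0) ^ 4 * Real.tan x ^ 2 + Real.cos ξ0 ^ 2) *
          Real.sin (θ - θmin)) :
    let c := swC g h
    let Fs : ℝ → ℝ := fun θ =>
      (1 / Real.cos η0) ^ 2 * Real.tan x * (v - c * swGs g11 g12 g22 θ) -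
        Real.cos ξ0 * (u - c * swGc g11 g12 g22 θ)
    let θmax := θmin + π
    (Fs θmin < 0 ∧ 0 < Fs θmax →
      ∃ θ1 ∈ Set.Ioo θmin θmax, ∃ θ2 ∈ Set.Ioo θmax (θmin + 2 * π),
        Fs θ1 = 0 ∧ Fs θ2 = 0 ∧
        ∀ θ ∈ Set.Ico θmin (θmin + 2 * π), Fs θ = 0 → θ = θ1 ∨ θ = θ2) ∧
    (¬(Fs θmin < 0 ∧ 0 < Fs θmax) →
      {θ ∈ Set.Ico θmin (θmin + 2 * π) | Fs θ = 0}.Subsingleton) := by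
  intro c Fs θmax
  set A := (1 / cos η0) ^ 2 * tan x
  set R := √((1 / cos η0) ^ 4 * tan x ^ 2 + cos ξ0 ^ 2)
  have hc : 0 < c := sqrt_pos.2 (mul_pos hg hh)
  have hR : 0 < R := by
    have hAB : A ≠ 0 ∨ cos ξ0 ≠ 0 := by
      by_contra! hAB
      exact hne (by rw [hAB.1, hAB.2])
    refine sqrt_pos.2 ?_
    rw [show (1 / cos η0) ^ 4 * tan x ^ 2 = A ^ 2 by ring]
    rcases hAB with h | h <;> positivity
  have hFs : ∀ θ, HasDerivAt Fs
      (c * (g11 * g22 - g12 ^ 2) / swK g11 g12 g22 θ ^ 3 * R * sin (θ - θmin)) θ := fun θ =>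
    (hasDerivAt_sub_swGs_sub_swGc h11 hdet A (cos ξ0) c u v θ).congr_deriv <| by
      rw [hθmin θ, mul_assoc]
  have hFs_pos : ∀ θ, 0 < c * (g11 * g22 - g12 ^ 2) / swK g11 g12 g22 θ ^ 3 * R := fun θ => by
    have := swK_pos h11 hdet θ
    positivity
  obtain ⟨hmono, hanti⟩ := strictMonoOn_strictAntiOn_of_hasDerivAt_mul_sin hFs_pos hFs
  have hper : Fs (θmin + 2 * π) = Fs θmin := by
    simp only [Fs, swGc_periodic θmin, swGs_periodic θmin]
  have hθmax : θmin ≤ θmax := by simp only [θmax]; linarith [pi_pos]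
  have hθmax' : θmax ≤ θmin + 2 * π := by simp only [θmax]; linarith [pi_pos]
  exact ⟨fun h => exists_two_zeros_of_strictMonoOn_strictAntiOn
      (fun θ _ => (hFs θ).continuousAt.continuousWithinAt) hmono hanti hθmax hθmax' hper h.1 h.2,
    subsingleton_zeros_of_strictMonoOn_strictAntiOn hmono hanti hθmax hθmax' hper⟩

/-- Roots of the boundary-intersection function `F_s` (Lemma B.4). -/
theorem roots_Fs
    (g h u v g11 g12 g22 ξ0 η0 x θmin : ℝ) (hg : 0 < g) (hh : 0 < h)
    (h11 : 0 < g11) (hdet : 0 < g11 * g22 - g12 ^ 2) (hcos : Real.cos η0 ≠ 0)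
    (hne : ((1 / Real.cos η0) ^ 2 * Real.tan x, Real.cos ξ0) ≠ (0, 0))
    (hθmin : ∀ θ : ℝ,
      -((1 / Real.cos η0) ^ 2 * Real.tan x) * Real.cos θ - Real.cos ξ0 * Real.sin θ =
        Real.sqrt ((1 / Real.cos η0) ^ 4 * Real.tan x ^ 2 + Real.cos ξ0 ^ 2) *
          Real.sin (θ - θmin)) :
    let c := swC g h
    let Fs : ℝ → ℝ := fun θ =>
      (1 / Real.cos η0) ^ 2 * Real.tan x * (v - c * swGs g11 g12 g22 θ) -
        Real.cos ξ0 * (u - c * swGc g11 g12 g22 θ)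
    let θmax := θmin + π
    (Fs θmin < 0 ∧ 0 < Fs θmax →
      ∃ θ1 ∈ Set.Ioo θmin θmax, ∃ θ2 ∈ Set.Ioo θmax (θmin + 2 * π),
        Fs θ1 = 0 ∧ Fs θ2 = 0 ∧
        ∀ θ ∈ Set.Ico θmin (θmin + 2 * π), Fs θ = 0 → θ = θ1 ∨ θ = θ2) ∧
    (¬(Fs θmin < 0 ∧ 0 < Fs θmax) →
      {θ ∈ Set.Ico θmin (θmin + 2 * π) | Fs θ = 0}.Subsingleton) :=
  roots_Fs_general g h u v g11 g12 g22 ξ0 η0 x θmin hg hh h11 hdet hne hθmin
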